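/- Let k₂, k₃ ∈ ℝ and define vector fields f, g : ℝ⁴ → ℝ⁴ by f(x) = k₂ x₃ • (0, 0, −1, 1) + k₃ x₄ • (0, 1, 0, −1) and g(x) = x₁ x₂ • (−1, 0, 1, 0). Then for every x ∈ ℝ⁴, [f, [f, g]](x) = x₁ • (−k₂ k₃ x₃ + k₃² x₄, k₂ k₃ x₂, k₂² x₂ − k₃² x₄ + k₂ k₃ x₃ + 2 k₂ k₃ x₄, −k₂ (k₂ x₂ + k₃ x₂ + 2 k₃ x₄)). (Second-order Lie bracket computation for the consecutive reaction X₁ + X₂ → X₂ + X₃, X₃ → X₄, X₄ → X₂.) -/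

import Mathlib

/-- The Lie bracket of two vector fields on `ℝ⁴`:
`[φ,ψ](x) = Dψ(x)(φ(x)) − Dφ(x)(ψ(x))`. -/
noncomputable def lieBracket (φ ψ : (Fin 4 → ℝ) → (Fin 4 → ℝ))
    (x : Fin 4 → ℝ) : Fin 4 → ℝ :=
  fderiv ℝ ψ x (φ x) - fderiv ℝ φ x (ψ x)

/-- Drift vector field `f(x) = k₂ x₃ • (0,0,−1,1) + k₃ x₄ • (0,1,0,−1)` of the
consecutive reaction `X₁ + X₂ → X₂ + X₃`, `X₃ → X₄`, `X₄ → X₂`. -/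
noncomputable def drift (k₂ k₃ : ℝ) (x : Fin 4 → ℝ) : Fin 4 → ℝ :=
  (k₂ * x 2) • ![0, 0, -1, 1] + (k₃ * x 3) • ![0, 1, 0, -1]

/-- Control vector field `g(x) = x₁ x₂ • (−1, 0, 1, 0)`. -/
noncomputable def ctrl (x : Fin 4 → ℝ) : Fin 4 → ℝ :=
  (x 0 * x 1) • ![-1, 0, 1, 0]


/-!
The drift `f` is linear, so for a scalar function `φ` and a constant vector `c` the bracket
`[f, φ • c] = (Dφ · f) • c - φ • f c` is again of this shape. Both `g` and `[f, g]` are sums of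
such fields with `φ` a product of two coordinates, so applying this rule twice reduces the double
bracket to a polynomial identity in each coordinate.
-/

theorem fderiv_coord_mul_coord_apply {𝕜 ι : Type*} [NontriviallyNormedField 𝕜] [Fintype ι]
    (i j : ι) (x v : ι → 𝕜) :
    fderiv 𝕜 (fun y : ι → 𝕜 ↦ y i * y j) x v = v i * x j + x i * v j := by
  rw [fderiv_fun_mul (by fun_prop) (by fun_prop), (hasFDerivAt_apply i x).fderiv,
    (hasFDerivAt_apply j x).fderiv]
  simp only [add_apply, smul_apply, ContinuousLinearMap.proj_apply, smul_eq_mul]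
  ring

namespace VectorField

variable {𝕜 : Type*} [NontriviallyNormedField 𝕜]

theorem lieBracket_smul_const_right {E : Type*} [NormedAddCommGroup E] [NormedSpace 𝕜 E]
    {V : E → E} {V' : E →L[𝕜] E} {φ : E → 𝕜} {x : E} (hV : HasFDerivAt V V' x)
    (hφ : DifferentiableAt 𝕜 φ x) (c : E) :
    VectorField.lieBracket 𝕜 V (fun y ↦ φ y • c) x = fderiv 𝕜 φ x (V x) • c - φ x • V' c := by
  simp only [VectorField.lieBracket_eq, fderiv_smul_const hφ, hV.fderiv]
  simp

theorem lieBracket_coord_mul_coord_smul {ι : Type*} [Fintype ι] {V : (ι → 𝕜) → ι → 𝕜}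
    {V' : (ι → 𝕜) →L[𝕜] ι → 𝕜} {x : ι → 𝕜} (hV : HasFDerivAt V V' x) (i j : ι) (c : ι → 𝕜) :
    VectorField.lieBracket 𝕜 V (fun y ↦ (y i * y j) • c) x =
      (V x i * x j + x i * V x j) • c - (x i * x j) • V' c := by
  rw [lieBracket_smul_const_right hV (by fun_prop), fderiv_coord_mul_coord_apply]

end VectorField

theorem lieBracket_eq_vectorField_lieBracket : lieBracket = VectorField.lieBracket ℝ := rfl

noncomputable def driftCLM (k₂ k₃ : ℝ) : (Fin 4 → ℝ) →L[ℝ] Fin 4 → ℝ :=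
  (k₂ • ContinuousLinearMap.proj 2).smulRight ![0, 0, -1, 1] +
    (k₃ • ContinuousLinearMap.proj 3).smulRight ![0, 1, 0, -1]

theorem coe_driftCLM (k₂ k₃ : ℝ) : ⇑(driftCLM k₂ k₃) = drift k₂ k₃ := by
  ext x i
  simp [driftCLM, drift]

theorem hasFDerivAt_drift (k₂ k₃ : ℝ) (x : Fin 4 → ℝ) :
    HasFDerivAt (drift k₂ k₃) (driftCLM k₂ k₃) x :=
  coe_driftCLM k₂ k₃ ▸ (driftCLM k₂ k₃).hasFDerivAt

theorem lieBracket_drift_ctrl (k₂ k₃ : ℝ) :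
    lieBracket (drift k₂ k₃) ctrl = (fun y ↦ (y 0 * y 3) • (k₃ • ![-1, 0, 1, 0])) +
      fun y ↦ (y 0 * y 1) • -drift k₂ k₃ ![-1, 0, 1, 0] := by
  ext1 y
  have h0 : drift k₂ k₃ y 0 = 0 := by simp [drift]
  have h1 : drift k₂ k₃ y 1 = k₃ * y 3 := by simp [drift]
  rw [lieBracket_eq_vectorField_lieBracket,
    show ctrl = fun y ↦ (y 0 * y 1) • ![-1, 0, 1, 0] from rfl,
    VectorField.lieBracket_coord_mul_coord_smul (hasFDerivAt_drift k₂ k₃ y), coe_driftCLM,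
    Pi.add_apply, h0, h1]
  module

/-- `[f, [f, g]](x) = x₁ • (−k₂k₃x₃ + k₃²x₄, k₂k₃x₂,
k₂²x₂ − k₃²x₄ + k₂k₃x₃ + 2k₂k₃x₄, −k₂(k₂x₂ + k₃x₂ + 2k₃x₄))` for every `x ∈ ℝ⁴`. -/
theorem lieBracket_drift_lieBracket (k₂ k₃ : ℝ) (x : Fin 4 → ℝ) :
    lieBracket (drift k₂ k₃) (lieBracket (drift k₂ k₃) ctrl) x =
      x 0 • ![-(k₂ * k₃ * x 2) + k₃ ^ 2 * x 3,
        k₂ * k₃ * x 1,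
        k₂ ^ 2 * x 1 - k₃ ^ 2 * x 3 + k₂ * k₃ * x 2 + 2 * k₂ * k₃ * x 3,
        -(k₂ * (k₂ * x 1 + k₃ * x 1 + 2 * k₃ * x 3))] := by
  rw [lieBracket_drift_ctrl, lieBracket_eq_vectorField_lieBracket,
    VectorField.lieBracket_add_right (by fun_prop) (by fun_prop),
    VectorField.lieBracket_coord_mul_coord_smul (hasFDerivAt_drift k₂ k₃ x),
    VectorField.lieBracket_coord_mul_coord_smul (hasFDerivAt_drift k₂ k₃ x), coe_driftCLM]
  ext i
  fin_cases i <;> simp [drift] <;> ring
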